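/- Let N ≥ 1, let a, b : Fin N → ℝ satisfy a i > 0 and b i > 0 for all i, let Σ be an N×N real symmetric positive semidefinite matrix, set D i j = Σ i i + Σ j j − 2·Σ i j and α i j = (a i + a j)/2, and let η > 0. Then the N×N matrix K with entries K i j = √(b i · b j / α i j) · (1 + η · D i j / α i j)^{−1/2} is positive semidefinite. -/

import Mathlib

/-!
Write `x i j = α i j + η D i j`, so that `K i j = √(b i) √(b j) (x i j)^(-1/2)`. The Gaussian
integral `x^(-1/2) = (2/√π) ∫₀^∞ exp(-x u²) du` reduces positivity of `K` to that of the
matrices `exp(-x i j u²) = e^(-a i u²/2) e^(-a j u²/2) exp(-η u² D i j)` for each `u`. Since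
`exp(-D i j) = e^(-S i i) e^(-S j j) exp(2 S i j)` and Hadamard products with rank-one matrices
`vecMulVec d d` preserve positivity, everything comes down to the entrywise exponential of a
positive semidefinite matrix, which is positive semidefinite by the Schur product theorem applied
to each term of the exponential series.
-/

open MeasureTheory Real Set Matrix
open scoped ComplexOrder

theorem Real.rpow_neg_one_half_eq_integral_gaussian {y : ℝ} (hy : 0 < y) :
    y ^ (-(1 : ℝ) / 2) = 2 / √π * ∫ u in Ioi (0 : ℝ), Real.exp (-y * u ^ 2) := by
  rw [integral_gaussian_Ioi, Real.sqrt_div Real.pi_pos.le, neg_div, Real.rpow_neg hy.le,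
    ← Real.sqrt_eq_rpow]
  have : √π ≠ 0 := by positivity
  field_simp

theorem Real.sqrt_div_mul_one_add_div_rpow_neg_half {c α y : ℝ} (hα : 0 < α) (hy : 0 ≤ y) :
    √(c / α) * (1 + y / α) ^ (-(1 : ℝ) / 2) = √c * (α + y) ^ (-(1 : ℝ) / 2) := by
  have hαy : 0 < α + y := by linarith
  rw [one_add_div hα.ne', Real.div_rpow hαy.le hα.le, Real.sqrt_div' c hα.le, neg_div,
    Real.rpow_neg hα.le, ← Real.sqrt_eq_rpow]
  have : √α ≠ 0 := by positivity
  field_simp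

namespace Matrix

variable {ι : Type*} [Fintype ι]

theorem posSemidef_iff_sum_mul_nonneg {M : Matrix ι ι ℝ} :
    M.PosSemidef ↔
      M.IsHermitian ∧ ∀ x : ι → ℝ, 0 ≤ ∑ i, ∑ j, x i * x j * M i j := by
  simp only [posSemidef_iff_dotProduct_mulVec, dotProduct, mulVec, star_trivial,
    Finset.mul_sum]
  simp only [mul_comm, mul_left_comm]

theorem PosSemidef.diag_add_diag_sub_two_mul_nonneg {S : Matrix ι ι ℝ}
    (hS : S.PosSemidef) (i j : ι) : 0 ≤ S i i + S j j - 2 * S i j := by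
  classical
  have h := hS.dotProduct_mulVec_nonneg (Pi.single i 1 - Pi.single j 1)
  have hji : S j i = S i j := hS.isHermitian.apply i j
  simp [sub_dotProduct, dotProduct_sub, mulVec_sub, mulVec_single,
    single_dotProduct, hji] at h
  linarith

theorem PosSemidef.map_pow {𝕜 : Type*} [RCLike 𝕜] {A : Matrix ι ι 𝕜}
    (hA : A.PosSemidef) : ∀ n : ℕ, (A.map (· ^ n)).PosSemidef
  | 0 => by
    convert posSemidef_vecMulVec_self_star (1 : ι → 𝕜) using 1
    ext i j
    simp [vecMulVec]
  | n + 1 => by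
    convert (hA.map_pow n).hadamard hA using 1
    ext i j
    simp [pow_succ]

theorem PosSemidef.map_exp {A : Matrix ι ι ℝ} (hA : A.PosSemidef) :
    (A.map Real.exp).PosSemidef := by
  refine posSemidef_iff_sum_mul_nonneg.2 ⟨hA.isHermitian.map _ fun _ => rfl, fun x => ?_⟩
  have hsum : HasSum (fun n : ℕ => (∑ i, ∑ j, x i * x j * A i j ^ n) / n.factorial)
      (∑ i, ∑ j, x i * x j * Real.exp (A i j)) := by
    simp only [Finset.sum_div, mul_div_assoc]
    refine hasSum_sum fun i _ => hasSum_sum fun j _ => ?_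
    simpa [Real.exp_eq_exp_ℝ] using
      (NormedSpace.expSeries_div_hasSum_exp (A i j)).mul_left (x i * x j)
  exact hsum.nonneg fun n =>
    div_nonneg ((posSemidef_iff_sum_mul_nonneg.1 (hA.map_pow n)).2 x) (Nat.cast_nonneg _)

theorem posSemidef_of_integral {α : Type*} [MeasurableSpace α] {μ : Measure α}
    {M : α → Matrix ι ι ℝ} (hM : ∀ u, (M u).PosSemidef)
    (hint : ∀ i j, Integrable (fun u => M u i j) μ) :
    (of fun i j => ∫ u, M u i j ∂μ).PosSemidef := by
  refine posSemidef_iff_sum_mul_nonneg.2 ⟨?_, fun x => ?_⟩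
  · ext i j
    simp only [conjTranspose_apply, of_apply, star_trivial]
    exact integral_congr_ae (.of_forall fun u => (hM u).isHermitian.apply i j)
  · have : ∑ i, ∑ j, x i * x j * of (fun i j => ∫ u, M u i j ∂μ) i j
        = ∫ u, ∑ i, ∑ j, x i * x j * M u i j ∂μ := by
      rw [integral_finsetSum _ fun i _ =>
        integrable_finsetSum _ fun j _ => (hint i j).const_mul _]
      refine Finset.sum_congr rfl fun i _ => ?_
      rw [integral_finsetSum _ fun j _ => (hint i j).const_mul _]
      simp only [of_apply, integral_const_mul]
    rw [this]
    exact integral_nonneg fun u => (posSemidef_iff_sum_mul_nonneg.1 (hM u)).2 x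

theorem PosSemidef.exp_neg_variogram {S : Matrix ι ι ℝ} (hS : S.PosSemidef) :
    (of fun i j => Real.exp (-(S i i + S j j - 2 * S i j))).PosSemidef := by
  set d : ι → ℝ := fun i => Real.exp (-S i i)
  have h : (of fun i j => Real.exp (-(S i i + S j j - 2 * S i j)))
      = vecMulVec d (star d) ⊙ ((2 : ℝ) • S).map Real.exp := by
    ext i j
    simp only [of_apply, hadamard_apply, vecMulVec_apply, star_trivial, map_apply, smul_apply,
      smul_eq_mul, d, ← Real.exp_add]
    ring_nf
  rw [h]
  exact (posSemidef_vecMulVec_self_star d).hadamard (hS.smul zero_le_two).map_exp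

theorem PosSemidef.rpow_neg_half_mean_add_variogram {S : Matrix ι ι ℝ} (hS : S.PosSemidef)
    {a : ι → ℝ} (ha : ∀ i, 0 < a i) {η : ℝ} (hη : 0 ≤ η) :
    (of fun i j =>
      ((a i + a j) / 2 + η * (S i i + S j j - 2 * S i j)) ^ (-(1 : ℝ) / 2)).PosSemidef := by
  set x : ι → ι → ℝ := fun i j => (a i + a j) / 2 + η * (S i i + S j j - 2 * S i j)
  have hx : ∀ i j, 0 < x i j := fun i j => by
    have := mul_nonneg hη (hS.diag_add_diag_sub_two_mul_nonneg i j)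
    show 0 < (a i + a j) / 2 + _
    linarith [ha i, ha j]
  have hgauss : ∀ u : ℝ, (of fun i j => Real.exp (-x i j * u ^ 2)).PosSemidef := fun u => by
    set d : ι → ℝ := fun i => Real.exp (-a i / 2 * u ^ 2)
    have h : (of fun i j => Real.exp (-x i j * u ^ 2)) = vecMulVec d (star d) ⊙
        of fun i j => Real.exp (-(((η * u ^ 2) • S) i i + ((η * u ^ 2) • S) j j
          - 2 * ((η * u ^ 2) • S) i j)) := by
      ext i j
      simp only [of_apply, hadamard_apply, vecMulVec_apply, star_trivial, smul_apply,
        smul_eq_mul, d, x, ← Real.exp_add]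
      ring_nf
    rw [h]
    exact (posSemidef_vecMulVec_self_star d).hadamard
      (hS.smul (mul_nonneg hη (sq_nonneg u))).exp_neg_variogram
  have hint : ∀ i j, Integrable (fun u => of (fun i j => Real.exp (-x i j * u ^ 2)) i j)
      (volume.restrict (Ioi 0)) := fun i j =>
    (integrable_exp_neg_mul_sq (hx i j)).integrableOn
  have h : (of fun i j => x i j ^ (-(1 : ℝ) / 2))
      = (2 / √π) • of fun i j => ∫ u in Ioi 0, Real.exp (-x i j * u ^ 2) := by
    ext i j
    exact Real.rpow_neg_one_half_eq_integral_gaussian (hx i j)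
  rw [h]
  exact (posSemidef_of_integral hgauss hint).smul (by positivity)

end Matrix

theorem stmt11_general (N : ℕ) (a b : Fin N → ℝ)
    (ha : ∀ i, 0 < a i) (hb : ∀ i, 0 < b i)
    (S : Matrix (Fin N) (Fin N) ℝ) (hS : S.PosSemidef)
    (η : ℝ) (hη : 0 < η)
    (K : Matrix (Fin N) (Fin N) ℝ)
    (hK : ∀ i j, K i j =
      Real.sqrt (b i * b j / ((a i + a j) / 2)) *
        (1 + η * (S i i + S j j - 2 * S i j) / ((a i + a j) / 2)) ^ (-(1 : ℝ) / 2)) :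
    ∀ r : Fin N → ℝ, 0 ≤ ∑ i, ∑ j, r i * r j * K i j := by
  set c : Fin N → ℝ := fun i => √(b i)
  have hK' : K = vecMulVec c (star c) ⊙ of fun i j =>
      ((a i + a j) / 2 + η * (S i i + S j j - 2 * S i j)) ^ (-(1 : ℝ) / 2) := by
    ext i j
    have hα : 0 < (a i + a j) / 2 := by linarith [ha i, ha j]
    rw [hK, Real.sqrt_div_mul_one_add_div_rpow_neg_half hα
      (mul_nonneg hη.le (hS.diag_add_diag_sub_two_mul_nonneg i j)), Real.sqrt_mul (hb i).le]
    simp [c, vecMulVec_apply]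
  have hK_psd : K.PosSemidef := by
    rw [hK']
    exact (posSemidef_vecMulVec_self_star c).hadamard
      (hS.rpow_neg_half_mean_add_variogram ha hη.le)
  exact (posSemidef_iff_sum_mul_nonneg.1 hK_psd).2

/-- Finite-dimensional form of Example 1 (Dirac measure at `η` in Theorem 1): the matrix with
entries `K i j = √(b i b j / α i j) (1 + η D i j / α i j)^{-1/2}`, where
`α i j = (a i + a j)/2` and `D i j = S i i + S j j - 2 S i j` for a positive semidefinite
matrix `S`, is positive semidefinite. -/
theorem stmt11 (N : ℕ) (hN : 1 ≤ N) (a b : Fin N → ℝ)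
    (ha : ∀ i, 0 < a i) (hb : ∀ i, 0 < b i)
    (S : Matrix (Fin N) (Fin N) ℝ) (hS : S.PosSemidef)
    (η : ℝ) (hη : 0 < η)
    (K : Matrix (Fin N) (Fin N) ℝ)
    (hK : ∀ i j, K i j =
      Real.sqrt (b i * b j / ((a i + a j) / 2)) *
        (1 + η * (S i i + S j j - 2 * S i j) / ((a i + a j) / 2)) ^ (-(1 : ℝ) / 2)) :
    ∀ r : Fin N → ℝ, 0 ≤ ∑ i, ∑ j, r i * r j * K i j :=
  stmt11_general N a b ha hb S hS η hη K hK
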